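/- Let L be a language over Σ satisfying the operational semi-extensible ZG condition with threshold p ≥ 2, let w be a word of length n over Σ, and let 1 ≤ l < n be a position such that the limit r_l satisfies r_l ≤ n. Then the limit r_{l+1} satisfies one of the following: (i) r_{l+1} = r_l; (ii) r_{l+1} = n + 1; (iii) r_l ≤ r_{l+1} ≤ n, the letter a = w[r_{l+1}] at position r_{l+1} is not neutral for L, and a occurs at most p times in the factor w[r_l..r_{l+1}] (i.e., r_{l+1} is one of the ≤ p first a's right of r_l). -/

import Mathlib

variable {α : Type*}

/-- `u` is a factor of `v`: `v = s ++ u ++ t` for some words `s, t`. -/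
def IsFactor (u v : List α) : Prop := ∃ s t : List α, v = s ++ u ++ t

/-- A letter `e` is neutral for the language `L`. -/
def Neutral (L : Set (List α)) (e : α) : Prop :=
  ∀ s t : List α, s ++ t ∈ L ↔ s ++ [e] ++ t ∈ L

/-- A language is extensible if it contains all extensions of its members. -/
def Extensible (L : Set (List α)) : Prop :=
  ∀ u v : List α, u ∈ L → IsFactor u v → v ∈ L

open Classical in
/-- `u_{-S}`: delete from `u` all occurrences of letters in `S`. -/
noncomputable def removeLetters (S : Set α) (u : List α) : List α :=
  u.filter (fun a => decide (a ∉ S))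

/-- `Cond L S`: words `u` such that some `v ∈ L` has `v_{-S}` a factor of `u_{-S}`. -/
def Cond (L : Set (List α)) (S : Set α) : Set (List α) :=
  {u | ∃ v ∈ L, IsFactor (removeLetters S v) (removeLetters S u)}

open Classical in
/-- Number of occurrences of the letter `a` in the word `u`. -/
noncomputable def countOcc (a : α) (u : List α) : ℕ :=
  u.countP (fun b => decide (b = a))

/-- `T_p(u)`: letters that are not neutral for `L` and occur at least `p` times in `u`. -/
def freqLetters (L : Set (List α)) (p : ℕ) (u : List α) : Set α :=
  {a | ¬ Neutral L a ∧ p ≤ countOcc a u}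

/-- Operational semi-extensible ZG condition with threshold `p`. -/
def OperationalSE (L : Set (List α)) (p : ℕ) : Prop :=
  ∀ u : List α, freqLetters L p u = ∅ ∨
    (removeLetters (freqLetters L p u) u ∈ Cond L (freqLetters L p u) ↔ u ∈ L)

/-- Self-contained semi-extensible ZG condition with threshold `p`. -/
def SelfContainedSE (L : Set (List α)) (p : ℕ) : Prop :=
  ∀ u v : List α, v ∈ L → freqLetters L p u ≠ ∅ →
    IsFactor (removeLetters (freqLetters L p u) v)
             (removeLetters (freqLetters L p u) u) →
    u ∈ L

/-- Syntactic congruence of `L`. -/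
def SyntEq (L : Set (List α)) (u v : List α) : Prop :=
  ∀ s t : List α, s ++ u ++ t ∈ L ↔ s ++ v ++ t ∈ L

/-- The setoid on words given by the syntactic congruence of `L`. -/
def syntSetoid (L : Set (List α)) : Setoid (List α) where
  r := SyntEq L
  iseqv := ⟨fun _ _ _ => Iff.rfl, fun h s t => (h s t).symm,
            fun h1 h2 s t => (h1 s t).trans (h2 s t)⟩

/-- `wpow x k` is the `k`-fold concatenation `x^k`. -/
def wpow (x : List α) : ℕ → List α
  | 0 => []
  | k + 1 => x ++ wpow x k

/-- Algebraic semi-extensible ZG condition for `n`: the ZG equation plus semi-extensibility. -/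
def AlgebraicSE (L : Set (List α)) (n : ℕ) : Prop :=
  (∀ x y : List α, SyntEq L (y ++ wpow x (n+1)) (wpow x (n+1) ++ y)) ∧
  (∀ (x y z : List α) (a : α), ¬ Neutral L a → y ∈ L →
    x ++ y ++ z ++ wpow [a] n ∈ L)

/-- `w[l..r]` with 1-based positions; empty when `r < l`. -/
def wslice (w : List α) (l r : ℕ) : List α := (w.drop (l - 1)).take (r + 1 - l)

/-- The pair `(l, r)` is good: `T_p(w[l..r]) ≠ ∅` and `w[l..r] ∈ Cond(T_p(w[l..r]))`. -/
def Good (L : Set (List α)) (p : ℕ) (w : List α) (l r : ℕ) : Prop :=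
  freqLetters L p (wslice w l r) ≠ ∅ ∧
  wslice w l r ∈ Cond L (freqLetters L p (wslice w l r))

/-- The limit `r_l`: least `r ≥ l` such that `(l, r')` is good for all `r ≤ r' ≤ |w|`. -/
noncomputable def limit (L : Set (List α)) (p : ℕ) (w : List α) (l : ℕ) : ℕ :=
  sInf {r | l ≤ r ∧ ∀ r' : ℕ, r ≤ r' → r' ≤ w.length → Good L p w l r'}


section AuxLemmas

variable {α : Type*}

lemma IsFactor.trans' {u v x : List α} (h1 : IsFactor u v) (h2 : IsFactor v x) :
    IsFactor u x := by
  obtain ⟨s, t, rfl⟩ := h1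
  obtain ⟨s', t', rfl⟩ := h2
  exact ⟨s' ++ s, t ++ t', by simp⟩

lemma isFactor_drop (k : ℕ) (u : List α) : IsFactor (u.drop k) u :=
  ⟨u.take k, [], by simp⟩

lemma removeLetters_append (S : Set α) (u v : List α) :
    removeLetters S (u ++ v) = removeLetters S u ++ removeLetters S v :=
  List.filter_append _ _

lemma IsFactor.removeLetters' (S : Set α) {u v : List α} (h : IsFactor u v) :
    IsFactor (removeLetters S u) (removeLetters S v) := by
  obtain ⟨s, t, rfl⟩ := h
  exact ⟨removeLetters S s, removeLetters S t, by
    simp [removeLetters, List.filter_append]⟩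

lemma removeLetters_removeLetters {T' T : Set α} (h : T' ⊆ T) (v : List α) :
    removeLetters T (removeLetters T' v) = removeLetters T v := by
  classical
  unfold removeLetters
  rw [List.filter_filter]
  apply List.filter_congr
  intro a _
  by_cases h1 : a ∈ T
  · have h2 := h1
    simp [h1]
  · have h2 : a ∉ T' := fun hx => h1 (h hx)
    simp [h1, h2]

lemma countOcc_append (a : α) (u v : List α) :
    countOcc a (u ++ v) = countOcc a u + countOcc a v :=
  List.countP_append

lemma countOcc_singleton_self (a : α) : countOcc a [a] = 1 := by
  unfold countOcc; simp

lemma countOcc_singleton_of_ne {a b : α} (h : b ≠ a) : countOcc a [b] = 0 := by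
  unfold countOcc; simp [h]

lemma countOcc_drop_le (a : α) (k : ℕ) (u : List α) :
    countOcc a (u.drop k) ≤ countOcc a u :=
  (List.drop_sublist k u).countP_le

lemma wslice_succ {w : List α} {a b : ℕ} (h1 : 1 ≤ a) (ha : a ≤ b + 1)
    (hb : b < w.length) : wslice w a (b + 1) = wslice w a b ++ [w[b]] := by
  unfold wslice
  rw [show b + 1 + 1 - a = (b + 1 - a) + 1 by omega, List.take_succ,
    List.getElem?_drop, show a - 1 + (b + 1 - a) = b by omega,
    List.getElem?_eq_getElem hb]
  rfl

lemma wslice_drop {w : List α} {a a' r : ℕ} (h1 : 1 ≤ a) (h : a ≤ a') :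
    wslice w a' r = (wslice w a r).drop (a' - a) := by
  unfold wslice
  rw [List.drop_take, List.drop_drop]
  congr 1
  · omega
  · rw [show a - 1 + (a' - a) = a' - 1 by omega]

lemma isFactor_append_singleton {u v : List α} {a : α} (h : IsFactor v (u ++ [a])) :
    IsFactor v u ∨ ∃ s m : List α, v = m ++ [a] ∧ u = s ++ m := by
  obtain ⟨s, t, heq⟩ := h
  rcases t.eq_nil_or_concat with rfl | ⟨t', b, rfl⟩
  · rcases v.eq_nil_or_concat with rfl | ⟨m, c, rfl⟩
    · exact Or.inl ⟨[], u, by simp⟩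
    · rw [List.concat_eq_append] at heq
      rw [List.append_nil, ← List.append_assoc] at heq
      obtain ⟨h1, h2⟩ := List.append_inj' heq.symm rfl
      have hca : c = a := by simpa using h2
      exact Or.inr ⟨s, m, by rw [hca, List.concat_eq_append], h1.symm⟩
  · rw [List.concat_eq_append] at heq
    rw [show s ++ v ++ (t' ++ [b]) = (s ++ v ++ t') ++ [b] by simp] at heq
    obtain ⟨h1, _⟩ := List.append_inj' heq.symm rfl
    exact Or.inl ⟨s, t', h1.symm⟩

lemma filter_eq_concat {p : α → Bool} :
    ∀ {v m : List α} {a : α}, v.filter p = m ++ [a] →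
    ∃ c d : List α, v = c ++ [a] ++ d ∧ c.filter p = m ∧ d.filter p = [] := by
  intro v
  induction v with
  | nil => intro m a h; simp at h
  | cons x v ih =>
    intro m a h
    by_cases hx : p x
    · rw [List.filter_cons_of_pos hx] at h
      cases m with
      | nil =>
        rw [List.nil_append] at h
        obtain ⟨rfl, h2⟩ : x = a ∧ v.filter p = [] := by
          constructor
          · exact (List.cons_eq_cons.mp h).1
          · exact (List.cons_eq_cons.mp h).2
        exact ⟨[], v, by simp, by simp, h2⟩
      | cons m0 m' =>
        rw [List.cons_append] at h
        obtain ⟨rfl, h2⟩ := List.cons_eq_cons.mp h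
        obtain ⟨c, d, hv, hc, hd⟩ := ih h2
        exact ⟨x :: c, d, by rw [hv]; simp,
          by rw [List.filter_cons_of_pos hx, hc], hd⟩
    · rw [List.filter_cons_of_neg hx] at h
      obtain ⟨c, d, hv, hc, hd⟩ := ih h
      exact ⟨x :: c, d, by rw [hv]; simp,
        by rw [List.filter_cons_of_neg hx]; exact hc, hd⟩

lemma good_shrink {L : Set (List α)} {p : ℕ} {w : List α} {l s : ℕ} (h1 : 1 ≤ l)
    (h : Good L p w (l + 1) s) : Good L p w l s := by
  obtain ⟨hne, hcond⟩ := h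
  obtain ⟨v, hv, hfac⟩ := hcond
  have hdrop : wslice w (l + 1) s = (wslice w l s).drop 1 := by
    rw [wslice_drop h1 (by omega : l ≤ l + 1), show l + 1 - l = 1 by omega]
  have hsub : freqLetters L p (wslice w (l + 1) s) ⊆ freqLetters L p (wslice w l s) := by
    rintro b ⟨hb1, hb2⟩
    refine ⟨hb1, hb2.trans ?_⟩
    rw [hdrop]
    exact countOcc_drop_le _ _ _
  obtain ⟨b, hb⟩ := Set.nonempty_iff_ne_empty.mpr hne
  refine ⟨Set.nonempty_iff_ne_empty.mp ⟨b, hsub hb⟩, v, hv, ?_⟩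
  have step1 := hfac.removeLetters' (freqLetters L p (wslice w l s))
  rw [removeLetters_removeLetters hsub, removeLetters_removeLetters hsub] at step1
  refine step1.trans' ?_
  apply IsFactor.removeLetters'
  rw [hdrop]
  exact isFactor_drop 1 _

lemma limit_spec {L : Set (List α)} {p : ℕ} {w : List α} {l : ℕ}
    (hl : l ≤ w.length + 1) :
    l ≤ limit L p w l ∧
    (∀ s, limit L p w l ≤ s → s ≤ w.length → Good L p w l s) ∧
    limit L p w l ≤ w.length + 1 := by
  have htop : (w.length + 1) ∈
      {r | l ≤ r ∧ ∀ r' : ℕ, r ≤ r' → r' ≤ w.length → Good L p w l r'} :=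
    ⟨hl, fun r' h1 h2 => absurd h2 (by omega)⟩
  have hmem := Nat.sInf_mem (⟨w.length + 1, htop⟩ :
    Set.Nonempty {r | l ≤ r ∧ ∀ r' : ℕ, r ≤ r' → r' ≤ w.length → Good L p w l r'})
  exact ⟨hmem.1, hmem.2, Nat.sInf_le htop⟩

lemma limit_min {L : Set (List α)} {p : ℕ} {w : List α} {l m : ℕ}
    (hm : m < limit L p w l) (hlm : l ≤ m) (hmn : m ≤ w.length)
    (hgood : ∀ s, m < s → s ≤ w.length → Good L p w l s) :
    ¬ Good L p w l m := by
  intro hg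
  have : limit L p w l ≤ m := Nat.sInf_le ⟨hlm, fun r' h1 h2 => by
    rcases eq_or_lt_of_le h1 with rfl | hlt
    · exact hg
    · exact hgood r' hlt h2⟩
  omega

lemma not_good_self {L : Set (List α)} {p : ℕ} (hp : 2 ≤ p) (w : List α) (l : ℕ) :
    ¬ Good L p w l l := by
  rintro ⟨hne, -⟩
  obtain ⟨a, -, ha⟩ := Set.nonempty_iff_ne_empty.mpr hne
  have hlen : (wslice w l l).length ≤ 1 := by
    unfold wslice
    rw [show l + 1 - l = 1 by omega]
    exact List.length_take_le _ _
  have hc : countOcc a (wslice w l l) ≤ 1 :=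
    le_trans List.countP_le_length hlen
  omega

end AuxLemmas

/-- bounded jump of the limit from `l` to `l+1`. -/
theorem limit_bounded_jump {α : Type*} (L : Set (List α)) (p : ℕ) (hp : 2 ≤ p)
    (hop : OperationalSE L p) (w : List α) (l : ℕ)
    (hl1 : 1 ≤ l) (hln : l < w.length)
    (hr : limit L p w l ≤ w.length) :
    limit L p w (l + 1) = limit L p w l ∨
    limit L p w (l + 1) = w.length + 1 ∨
    (limit L p w l ≤ limit L p w (l + 1) ∧ limit L p w (l + 1) ≤ w.length ∧
      ∃ a : α, w[limit L p w (l + 1) - 1]? = some a ∧ ¬ Neutral L a ∧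
        countOcc a (wslice w (limit L p w l) (limit L p w (l + 1))) ≤ p) := by
  classical
  obtain ⟨hl_le, hgoodl, hl_top⟩ := limit_spec (L := L) (p := p) (w := w) (l := l)
    (by omega)
  obtain ⟨hl1_le, hgoodl1, hl1_top⟩ := limit_spec (L := L) (p := p) (w := w)
    (l := l + 1) (by omega)
  set rl := limit L p w l with hrl
  set r2 := limit L p w (l + 1) with hr2v
  have hrl1 : l + 1 ≤ rl := by
    by_contra hcon
    exact not_good_self hp w l (hgoodl l (by omega) (by omega))
  by_cases htop : r2 = w.length + 1
  · exact Or.inr (Or.inl htop)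
  have hr2n : r2 ≤ w.length := by omega
  by_cases heq : r2 = rl
  · exact Or.inl heq
  have hlt : rl < r2 := by
    by_contra hle
    have h2lt : r2 < rl := by omega
    have hg1 : Good L p w (l + 1) (rl - 1) := hgoodl1 (rl - 1) (by omega) (by omega)
    have hg0 : Good L p w l (rl - 1) := good_shrink hl1 hg1
    exact limit_min (by omega) (by omega) (by omega)
      (fun s hs hsn => hgoodl s (by omega) hsn) hg0
  have hngood : ¬ Good L p w (l + 1) (r2 - 1) :=
    limit_min (by omega) (by omega) (by omega)
      (fun s hs hsn => hgoodl1 s (by omega) hsn)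
  have hgood2 : Good L p w (l + 1) r2 := hgoodl1 r2 le_rfl hr2n
  have hb : r2 - 1 < w.length := by omega
  set a := w[r2 - 1] with ha
  have hu2 : wslice w (l + 1) r2 = wslice w (l + 1) (r2 - 1) ++ [a] := by
    have h := wslice_succ (w := w) (a := l + 1) (b := r2 - 1) (by omega) (by omega) hb
    rwa [show r2 - 1 + 1 = r2 by omega] at h
  obtain ⟨hT2ne, hcond2⟩ := hgood2
  obtain ⟨v, hv, hvfac⟩ := hcond2
  set T2 := freqLetters L p (wslice w (l + 1) r2) with hT2
  set T1 := freqLetters L p (wslice w (l + 1) (r2 - 1)) with hT1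
  have hnotneut : ¬ Neutral L a := by
    intro hneut
    apply hngood
    have hTeq : T1 = T2 := by
      ext b
      constructor <;> rintro ⟨hb1, hb2⟩ <;> refine ⟨hb1, ?_⟩
      · rw [hu2, countOcc_append]; omega
      · have hba : b ≠ a := fun h => hb1 (h ▸ hneut)
        rw [hu2, countOcc_append, countOcc_singleton_of_ne (Ne.symm hba)] at hb2
        omega
    constructor
    · show T1 ≠ ∅
      rw [hTeq]
      exact hT2ne
    · rw [show freqLetters L p (wslice w (l + 1) (r2 - 1)) = T2 from hTeq]
      have hanotT2 : a ∉ T2 := fun hmem => hmem.1 hneut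
      have hrm : removeLetters T2 (wslice w (l + 1) r2)
          = removeLetters T2 (wslice w (l + 1) (r2 - 1)) ++ [a] := by
        rw [hu2, removeLetters_append]
        congr 1
        unfold removeLetters
        simp [hanotT2]
      rw [hrm] at hvfac
      rcases isFactor_append_singleton hvfac with hf | ⟨s, m, hveq, hueq⟩
      · exact ⟨v, hv, hf⟩
      · obtain ⟨c, d, hvdec, hc, hd⟩ :=
          filter_eq_concat (v := v) (m := m) (a := a) hveq
        subst hvdec
        refine ⟨c ++ d, (hneut c d).mpr hv, s, [], ?_⟩
        have hcd : removeLetters T2 (c ++ d) = m := by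
          rw [removeLetters_append]
          show c.filter _ ++ d.filter _ = m
          rw [hc, hd, List.append_nil]
        rw [hueq, hcd, List.append_nil]
  have hcount : countOcc a (wslice w rl r2) ≤ p := by
    by_contra hc
    push_neg at hc
    apply hngood
    have hsl : wslice w rl r2 = wslice w rl (r2 - 1) ++ [a] := by
      have h := wslice_succ (w := w) (a := rl) (b := r2 - 1) (by omega) (by omega) hb
      rwa [show r2 - 1 + 1 = r2 by omega] at h
    have h1 : p ≤ countOcc a (wslice w rl (r2 - 1)) := by
      rw [hsl, countOcc_append, countOcc_singleton_self] at hc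
      omega
    have h2 : p ≤ countOcc a (wslice w (l + 1) (r2 - 1)) := by
      refine h1.trans ?_
      rw [wslice_drop (w := w) (a := l + 1) (a' := rl) (r := r2 - 1) (by omega) hrl1]
      exact countOcc_drop_le _ _ _
    have haT1 : a ∈ T1 := ⟨hnotneut, h2⟩
    have hTeq : T1 = T2 := by
      ext b
      constructor <;> rintro ⟨hb1, hb2⟩ <;> refine ⟨hb1, ?_⟩
      · rw [hu2, countOcc_append]; omega
      · by_cases hba : b = a
        · subst hba; exact h2
        · rw [hu2, countOcc_append, countOcc_singleton_of_ne (Ne.symm hba)] at hb2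
          omega
    have haT2 : a ∈ T2 := hTeq ▸ haT1
    have hrm : removeLetters T2 (wslice w (l + 1) r2)
        = removeLetters T2 (wslice w (l + 1) (r2 - 1)) := by
      rw [hu2, removeLetters_append]
      have hra : removeLetters T2 [a] = [] := by
        unfold removeLetters
        simp [haT2]
      rw [hra, List.append_nil]
    constructor
    · show T1 ≠ ∅
      rw [hTeq]
      exact hT2ne
    · rw [show freqLetters L p (wslice w (l + 1) (r2 - 1)) = T2 from hTeq]
      exact ⟨v, hv, by rw [← hrm]; exact hvfac⟩
  exact Or.inr (Or.inr ⟨le_of_lt hlt, hr2n, a,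
    by rw [List.getElem?_eq_getElem hb], hnotneut, hcount⟩)
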